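/- arXiv:2110.08543 — 2 statements merged into one kernel-verified Lean document; each statement's English description precedes it below -/
import Mathlib

section
/- Let n ∈ ℕ, 1 < p < ∞, q = p/(p−1) and r ∈ (0,1]. If ε ≤ t₁ s₁ then E(A, W^{T,S}_{p,q}, J^n_{ε,r}) = E(A, W^{T,S}_{p,q}, J^n_{ε,r}, Ψ*_n) = t_{n+1} s_{n+1} + ε (1 − t_{n+1} s_{n+1}/(t₁ s₁)); and if ε > t₁ s₁ then E(A, W^{T,S}_{p,q}, J^n_{ε,r}) = E(A, W^{T,S}_{p,q}, J^n_{ε,r}, Ψ*_0) = t₁ s₁. -/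
open scoped ENNReal NNReal BigOperators

/-- The `ℓ_q` (quasi-)norm `(∑ |x_k|^q)^{1/q}` of a complex sequence, valued in `ℝ≥0∞`. -/
noncomputable def lqNorm (q : ℝ) (x : ℕ → ℂ) : ℝ≥0∞ :=
  (∑' k, (‖x k‖₊ : ℝ≥0∞) ^ q) ^ (1 / q)

/-- The class `W^T_q = {Th : h ∈ ℓ_q, ‖h‖_q ≤ 1}`, where `T` is the diagonal operator
determined by the sequence `t` (0-based indexing: `t k` is the paper's `t_{k+1}`). -/
def WT (q : ℝ) (t : ℕ → ℝ) : Set (ℕ → ℂ) :=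
  {x | ∃ h : ℕ → ℂ, (∀ k, x k = (t k : ℂ) * h k) ∧ lqNorm q h ≤ 1}

/-- The scalar product `A(x,y) = ⟨x,y⟩ = ∑_{k=1}^∞ x_k y_k`. -/
noncomputable def scalarProd (x y : ℕ → ℂ) : ℂ := ∑' k, x k * y k

/-- The error `E(A, W₁ × W₂, J, Ψ) = sup_{(x,y)} sup_{(a,b) ∈ J(x,y)} |⟨x,y⟩ − Ψ(a,b)|`
of a recovery method `Ψ` for the scalar product. -/
noncomputable def recErrSP {Z : Type*} (W₁ W₂ : Set (ℕ → ℂ))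
    (J : (ℕ → ℂ) → (ℕ → ℂ) → Set Z) (Ψ : Z → ℂ) : ℝ≥0∞ :=
  ⨆ x ∈ W₁, ⨆ y ∈ W₂, ⨆ ab ∈ J x y, (‖scalarProd x y - Ψ ab‖₊ : ℝ≥0∞)

/-- The error of optimal recovery `E(A, W₁ × W₂, J) = inf_Ψ E(A, W₁ × W₂, J, Ψ)`. -/
noncomputable def optErrSP {Z : Type*} (W₁ W₂ : Set (ℕ → ℂ))
    (J : (ℕ → ℂ) → (ℕ → ℂ) → Set Z) : ℝ≥0∞ :=
  ⨅ Ψ : Z → ℂ, recErrSP W₁ W₂ J Ψ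

/-- The method `Ψ*_m(a,b) = ∑_{k=1}^m a_k b_k (1 − t_{m+1}s_{m+1}/(t_k s_k))`
(0-based: `t m * s m` is the paper's `t_{m+1}s_{m+1}`); `PsiStar t s n 0 = Ψ*_0 = 0`. -/
noncomputable def PsiStar (t s : ℕ → ℝ) (n m : ℕ)
    (ab : (Fin n → ℂ) × (Fin n → ℂ)) : ℂ :=
  ∑ k : Fin n, if (k : ℕ) < m then
    ab.1 k * ab.2 k * ((1 - t m * s m / (t (k : ℕ) * s (k : ℕ)) : ℝ) : ℂ) else 0

/-- The information mapping
`J^n_{ε,r}(x,y) = {(a,b) ∈ ℂⁿ × ℂⁿ : (∑_{k=1}^n |x_k y_k − a_k b_k|^r)^{1/r} ≤ ε}`. -/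
def infoProdLr (n : ℕ) (r ε : ℝ) (x y : ℕ → ℂ) : Set ((Fin n → ℂ) × (Fin n → ℂ)) :=
  {ab | (∑ k : Fin n, ‖x (k : ℕ) * y (k : ℕ) - ab.1 k * ab.2 k‖ ^ r) ^ (1 / r) ≤ ε}

/-!
Write `c_k = t_k s_k`. For `x = Th`, `y = Sg` Hölder's inequality gives `|x_k y_k| ≤ c_k D_k` with
`∑ D_k ≤ 1`. The method `Ψ*_n` damps the `k`-th observed product by `1 - c_{n+1}/c_k`, so its error
is at most `c_{n+1} ∑ D_k` plus `1 - c_{n+1}/c_1` times the `ℓ₁`-error of the data, and for `r ≤ 1`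
the `ℓ₁`-error is at most the `ℓ_r`-error `ε`; `Ψ*_0 = 0` errs by at most `c_1`.
Conversely, for `x_k y_k = c_k w_k` with `w = α δ_1 + β δ_{n+1}` and `c_1 α ≤ ε`, the zero data
are consistent with both `(x, y)` and `(-x, y)`, so every method errs by at least
`c_1 α + c_{n+1} β`; take `α = ε / c_1`, `β = 1 - α` if `ε ≤ c_1`, and `α = 1`, `β = 0` otherwise.
-/

open Finset

section RecoveryError

variable {Z : Type*} {W₁ W₂ : Set (ℕ → ℂ)} {J : (ℕ → ℂ) → (ℕ → ℂ) → Set Z}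

theorem scalarProd_neg_left (x y : ℕ → ℂ) : scalarProd (-x) y = -scalarProd x y := by
  simp only [scalarProd, Pi.neg_apply, neg_mul, tsum_neg]

theorem enorm_sub_le_recErrSP {x y : ℕ → ℂ} (hx : x ∈ W₁) (hy : y ∈ W₂) {z : Z}
    (hz : z ∈ J x y) (Ψ : Z → ℂ) : ‖scalarProd x y - Ψ z‖ₑ ≤ recErrSP W₁ W₂ J Ψ :=
  le_iSup₂_of_le x hx <| le_iSup₂_of_le y hy <| le_iSup₂_of_le z hz le_rfl

theorem recErrSP_le {Ψ : Z → ℂ} {C : ℝ≥0∞}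
    (h : ∀ x ∈ W₁, ∀ y ∈ W₂, ∀ z ∈ J x y, ‖scalarProd x y - Ψ z‖ₑ ≤ C) :
    recErrSP W₁ W₂ J Ψ ≤ C :=
  iSup₂_le fun x hx => iSup₂_le fun y hy => iSup₂_le fun z hz => h x hx y hy z hz

/-- `Ψ z` cannot be close to both `⟨x, y⟩` and `⟨-x, y⟩ = -⟨x, y⟩`. -/
theorem enorm_scalarProd_le_optErrSP {x y : ℕ → ℂ} (hx : x ∈ W₁) (hx' : -x ∈ W₁) (hy : y ∈ W₂)
    {z : Z} (hz : z ∈ J x y) (hz' : z ∈ J (-x) y) :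
    ‖scalarProd x y‖ₑ ≤ optErrSP W₁ W₂ J := by
  refine le_iInf fun Ψ => ?_
  have h2 : 2 * ‖scalarProd x y‖ₑ ≤ 2 * recErrSP W₁ W₂ J Ψ := calc
    2 * ‖scalarProd x y‖ₑ = ‖(scalarProd x y - Ψ z) - (scalarProd (-x) y - Ψ z)‖ₑ := by
      rw [scalarProd_neg_left, sub_sub_sub_cancel_right, sub_neg_eq_add, ← two_mul, enorm_mul]
      simp [enorm_eq_nnnorm]
    _ ≤ ‖scalarProd x y - Ψ z‖ₑ + ‖scalarProd (-x) y - Ψ z‖ₑ := enorm_sub_le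
    _ ≤ recErrSP W₁ W₂ J Ψ + recErrSP W₁ W₂ J Ψ :=
      add_le_add (enorm_sub_le_recErrSP hx hy hz Ψ) (enorm_sub_le_recErrSP hx' hy hz' Ψ)
    _ = 2 * recErrSP W₁ W₂ J Ψ := (two_mul _).symm
  exact (ENNReal.mul_le_mul_iff_right two_ne_zero ENNReal.ofNat_ne_top).1 h2

theorem optErrSP_eq_recErrSP_of_le {Ψ : Z → ℂ} {V : ℝ≥0∞} (hup : recErrSP W₁ W₂ J Ψ ≤ V)
    (hlow : V ≤ optErrSP W₁ W₂ J) :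
    optErrSP W₁ W₂ J = recErrSP W₁ W₂ J Ψ ∧ recErrSP W₁ W₂ J Ψ = V :=
  have hopt : optErrSP W₁ W₂ J ≤ recErrSP W₁ W₂ J Ψ := iInf_le _ Ψ
  ⟨hopt.antisymm (hup.trans hlow), hup.antisymm (hlow.trans hopt)⟩

end RecoveryError

section SequenceClasses

variable {p q : ℝ}

theorem lqNorm_neg (h : ℕ → ℂ) : lqNorm q (-h) = lqNorm q h := by
  simp [lqNorm]

theorem neg_mem_WT {t : ℕ → ℝ} {x : ℕ → ℂ} (hx : x ∈ WT q t) : -x ∈ WT q t := by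
  obtain ⟨h, hxh, hh⟩ := hx
  exact ⟨-h, fun k => by simp [hxh k], (lqNorm_neg h).trans_le hh⟩

theorem lqNorm_rpow_inv (hq : 0 < q) {w : ℕ → ℝ} (hw : ∀ k, 0 ≤ w k) (hws : Summable w) :
    lqNorm q (fun k => ((w k ^ (1 / q) : ℝ) : ℂ)) = ENNReal.ofReal (∑' k, w k) ^ (1 / q) := by
  have hterm : ∀ k, (‖((w k ^ (1 / q) : ℝ) : ℂ)‖₊ : ℝ≥0∞) ^ q = ENNReal.ofReal (w k) := fun k => by
    rw [Complex.nnnorm_real, ← enorm_eq_nnnorm, Real.enorm_eq_ofReal (Real.rpow_nonneg (hw k) _),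
      ENNReal.ofReal_rpow_of_nonneg (Real.rpow_nonneg (hw k) _) hq.le, ← Real.rpow_mul (hw k),
      one_div_mul_cancel hq.ne', Real.rpow_one]
  simp only [lqNorm, hterm, ENNReal.ofReal_tsum_of_nonneg hw hws]

theorem mem_WT_of_tsum_le_one (hq : 0 < q) (t : ℕ → ℝ) {w : ℕ → ℝ} (hw : ∀ k, 0 ≤ w k)
    (hws : Summable w) (hw1 : ∑' k, w k ≤ 1) :
    (fun k => (t k : ℂ) * ((w k ^ (1 / q) : ℝ) : ℂ)) ∈ WT q t := by
  refine ⟨_, fun k => rfl, ?_⟩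
  rw [lqNorm_rpow_inv hq hw hws]
  exact ENNReal.rpow_le_one (ENNReal.ofReal_le_one.2 hw1) (by positivity)

theorem tsum_enorm_mul_le_lqNorm_mul (hpq : p.HolderConjugate q) (h g : ℕ → ℂ) :
    ∑' k, ‖h k‖ₑ * ‖g k‖ₑ ≤ lqNorm p h * lqNorm q g := by
  have := hpq.pos
  have := hpq.symm.pos
  rw [ENNReal.tsum_eq_iSup_sum]
  refine iSup_le fun u => (ENNReal.inner_le_Lp_mul_Lq u _ _ hpq).trans ?_
  unfold lqNorm
  gcongr <;> exact ENNReal.sum_le_tsum u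

theorem exists_norm_mul_le_of_mem_WT (hpq : p.HolderConjugate q) {t s : ℕ → ℝ}
    (ht : ∀ k, 0 ≤ t k) (hs : ∀ k, 0 ≤ s k) {x y : ℕ → ℂ} (hx : x ∈ WT p t) (hy : y ∈ WT q s) :
    ∃ D : ℕ → ℝ, (∀ k, 0 ≤ D k) ∧ Summable D ∧ ∑' k, D k ≤ 1 ∧
      ∀ k, ‖x k * y k‖ ≤ t k * s k * D k := by
  obtain ⟨h, hxh, hh⟩ := hx
  obtain ⟨g, hyg, hg⟩ := hy
  have hE : ∑' k, ‖h k‖ₑ * ‖g k‖ₑ ≤ 1 :=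
    (tsum_enorm_mul_le_lqNorm_mul hpq h g).trans (mul_le_one' hh hg)
  have htoReal : ∀ k, (‖h k‖ₑ * ‖g k‖ₑ).toReal = ‖h k‖ * ‖g k‖ := fun k => by
    simp [ENNReal.toReal_mul]
  refine ⟨fun k => ‖h k‖ * ‖g k‖, fun k => by positivity, ?_, ?_, fun k => ?_⟩
  · simpa only [htoReal] using ENNReal.summable_toReal (hE.trans_lt ENNReal.one_lt_top).ne
  · rw [← funext htoReal, ← ENNReal.tsum_toReal_eq fun k => by finiteness]
    exact ENNReal.toReal_le_of_le_ofReal zero_le_one (by rwa [ENNReal.ofReal_one])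
  · rw [hxh, hyg, norm_mul, norm_mul, norm_mul, Complex.norm_real, Complex.norm_real,
      Real.norm_of_nonneg (ht k), Real.norm_of_nonneg (hs k)]
    exact (mul_mul_mul_comm _ _ _ _).le

end SequenceClasses

section Estimates

theorem norm_tsum_le_of_norm_le_mul {ι E : Type*} [SeminormedAddCommGroup E] {f : ι → E}
    {D : ι → ℝ} {C : ℝ} (hC : 0 ≤ C) (hD : Summable D) (hD1 : ∑' k, D k ≤ 1)
    (hf : ∀ k, ‖f k‖ ≤ C * D k) : ‖∑' k, f k‖ ≤ C := calc
  ‖∑' k, f k‖ ≤ ∑' k, C * D k := tsum_of_norm_bounded (hD.mul_left C).hasSum hf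
  _ = C * ∑' k, D k := tsum_mul_left
  _ ≤ C := mul_le_of_le_one_right hC hD1

theorem Real.rpow_sum_le_sum_rpow {ι : Type*} (s : Finset ι) {f : ι → ℝ}
    (hf : ∀ i ∈ s, 0 ≤ f i) {r : ℝ} (hr0 : 0 < r) (hr1 : r ≤ 1) :
    (∑ i ∈ s, f i) ^ r ≤ ∑ i ∈ s, f i ^ r := by
  classical
  induction s using Finset.induction_on with
  | empty => simp [Real.zero_rpow hr0.ne']
  | insert i s hi ih =>
    have hfs : ∀ j ∈ s, 0 ≤ f j := fun j hj => hf j (mem_insert_of_mem hj)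
    rw [sum_insert hi, sum_insert hi]
    exact (Real.rpow_add_le_add_rpow (hf i (mem_insert_self i s)) (sum_nonneg hfs) hr0.le
      hr1).trans (add_le_add_right (ih hfs) _)

theorem Real.sum_le_rpow_sum_rpow_inv {ι : Type*} (s : Finset ι) {f : ι → ℝ}
    (hf : ∀ i ∈ s, 0 ≤ f i) {r : ℝ} (hr0 : 0 < r) (hr1 : r ≤ 1) :
    ∑ i ∈ s, f i ≤ (∑ i ∈ s, f i ^ r) ^ (1 / r) := by
  rw [one_div, Real.le_rpow_inv_iff_of_pos (sum_nonneg hf)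
    (sum_nonneg fun i hi => Real.rpow_nonneg (hf i hi) r) hr0]
  exact Real.rpow_sum_le_sum_rpow s hf hr0 hr1

/-- With `λ_k = c_n / c_k` for `k < n` and `λ_k = 1` otherwise, the error splits into
`∑ λ_k z_k`, bounded since `λ_k c_k ≤ c_n`, and `∑_{k<n} (1 - λ_k) (z_k - w_k)`. -/
theorem norm_tsum_sub_sum_le {c : ℕ → ℝ} (hc : Antitone c) (hcpos : ∀ k, 0 < c k)
    {z : ℕ → ℂ} {D : ℕ → ℝ} (hD0 : ∀ k, 0 ≤ D k) (hD : Summable D) (hD1 : ∑' k, D k ≤ 1)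
    (hz : ∀ k, ‖z k‖ ≤ c k * D k) {n : ℕ} (w : Fin n → ℂ) :
    ‖∑' k, z k - ∑ k : Fin n, w k * ((1 - c n / c k : ℝ) : ℂ)‖ ≤
      c n + (1 - c n / c 0) * ∑ k : Fin n, ‖z k - w k‖ := by
  set f : ℕ → ℂ := fun k => if k < n then ((c n / c k : ℝ) : ℂ) * z k else z k with hf_def
  have hf : ∀ k, ‖f k‖ ≤ c n * D k := fun k => by
    by_cases hk : k < n
    · simp only [hf_def, if_pos hk]
      rw [norm_mul, Complex.norm_real,
        Real.norm_of_nonneg (div_nonneg (hcpos n).le (hcpos k).le)]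
      calc c n / c k * ‖z k‖ ≤ c n / c k * (c k * D k) :=
            mul_le_mul_of_nonneg_left (hz k) (div_nonneg (hcpos n).le (hcpos k).le)
        _ = c n * D k := by field_simp [(hcpos k).ne']
    · simp only [hf_def, if_neg hk]
      exact (hz k).trans (mul_le_mul_of_nonneg_right (hc (not_lt.1 hk)) (hD0 k))
  have hrest : HasSum (fun k => z k - f k) (∑ k : Fin n, ((1 - c n / c k : ℝ) : ℂ) * z k) := by
    have hsupp : ∀ k ∉ range n, z k - f k = 0 := fun k hk => by
      simp [hf_def, if_neg (by simpa using hk : ¬k < n)]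
    have hsum : ∑ k ∈ range n, (z k - f k) = ∑ k : Fin n, ((1 - c n / c k : ℝ) : ℂ) * z k := by
      rw [Fin.sum_univ_eq_sum_range (fun k => ((1 - c n / c k : ℝ) : ℂ) * z k)]
      refine sum_congr rfl fun k hk => ?_
      simp only [hf_def, if_pos (mem_range.1 hk)]
      push_cast
      ring
    exact hsum ▸ hasSum_sum_of_ne_finset_zero hsupp
  have hsplit : ∑' k, z k - ∑ k : Fin n, w k * ((1 - c n / c k : ℝ) : ℂ) =
      ∑' k, f k + ∑ k : Fin n, (z k - w k) * ((1 - c n / c k : ℝ) : ℂ) := by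
    have hz_sum : HasSum z (∑' k, f k + ∑ k : Fin n, ((1 - c n / c k : ℝ) : ℂ) * z k) := by
      simpa using (Summable.of_norm_bounded (hD.mul_left _) hf).hasSum.add hrest
    rw [hz_sum.tsum_eq, add_sub_assoc, ← sum_sub_distrib]
    congr 1
    exact sum_congr rfl fun k _ => by ring
  have hweights : ‖∑ k : Fin n, (z k - w k) * ((1 - c n / c k : ℝ) : ℂ)‖ ≤
      (1 - c n / c 0) * ∑ k : Fin n, ‖z k - w k‖ := by
    rw [mul_sum]
    refine (norm_sum_le _ _).trans (sum_le_sum fun k _ => ?_)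
    have hle : c n / c k ≤ 1 := (div_le_one (hcpos k)).2 (hc k.2.le)
    have hge : c n / c 0 ≤ c n / c k :=
      div_le_div_of_nonneg_left (hcpos n).le (hcpos k) (hc (Nat.zero_le k))
    rw [norm_mul, Complex.norm_real, Real.norm_of_nonneg (by linarith), mul_comm]
    exact mul_le_mul_of_nonneg_right (by linarith) (norm_nonneg _)
  rw [hsplit]
  exact (norm_add_le _ _).trans
    (add_le_add (norm_tsum_le_of_norm_le_mul (hcpos n).le hD hD1 hf) hweights)

end Estimates

section Recovery

variable {n : ℕ} {p q r ε : ℝ} {t s : ℕ → ℝ}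

theorem PsiStar_zero (ab : (Fin n → ℂ) × (Fin n → ℂ)) : PsiStar t s n 0 ab = 0 :=
  sum_eq_zero fun _ _ => if_neg (Nat.not_lt_zero _)

theorem PsiStar_self (ab : (Fin n → ℂ) × (Fin n → ℂ)) :
    PsiStar t s n n ab = ∑ k : Fin n, ab.1 k * ab.2 k * ((1 - t n * s n / (t k * s k) : ℝ) : ℂ) :=
  sum_congr rfl fun k _ => if_pos k.2

theorem sum_norm_sub_le_of_mem_infoProdLr (hr0 : 0 < r) (hr1 : r ≤ 1) {x y : ℕ → ℂ}
    {ab : (Fin n → ℂ) × (Fin n → ℂ)} (hab : ab ∈ infoProdLr n r ε x y) :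
    ∑ k : Fin n, ‖x k * y k - ab.1 k * ab.2 k‖ ≤ ε :=
  (Real.sum_le_rpow_sum_rpow_inv _ (fun _ _ => norm_nonneg _) hr0 hr1).trans hab

theorem recErrSP_PsiStar_zero_le (hpq : p.HolderConjugate q) (htpos : ∀ k, 0 < t k)
    (htmono : Antitone t) (hspos : ∀ k, 0 < s k) (hsmono : Antitone s) :
    recErrSP (WT p t) (WT q s) (infoProdLr n r ε) (PsiStar t s n 0) ≤
      ENNReal.ofReal (t 0 * s 0) := by
  refine recErrSP_le fun x hx y hy ab _ => ?_
  obtain ⟨D, hD0, hD, hD1, hxy⟩ :=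
    exists_norm_mul_le_of_mem_WT hpq (fun k => (htpos k).le) (fun k => (hspos k).le) hx hy
  rw [PsiStar_zero, sub_zero, ← ofReal_norm]
  refine ENNReal.ofReal_le_ofReal
    (norm_tsum_le_of_norm_le_mul (mul_pos (htpos 0) (hspos 0)).le hD hD1 fun k => ?_)
  refine (hxy k).trans (mul_le_mul_of_nonneg_right ?_ (hD0 k))
  exact mul_le_mul (htmono k.zero_le) (hsmono k.zero_le) (hspos k).le (htpos 0).le

theorem recErrSP_PsiStar_self_le (hpq : p.HolderConjugate q) (hr0 : 0 < r) (hr1 : r ≤ 1)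
    (htpos : ∀ k, 0 < t k) (htmono : Antitone t) (hspos : ∀ k, 0 < s k) (hsmono : Antitone s) :
    recErrSP (WT p t) (WT q s) (infoProdLr n r ε) (PsiStar t s n n) ≤
      ENNReal.ofReal (t n * s n + ε * (1 - t n * s n / (t 0 * s 0))) := by
  refine recErrSP_le fun x hx y hy ab hab => ?_
  obtain ⟨D, hD0, hD, hD1, hxy⟩ :=
    exists_norm_mul_le_of_mem_WT hpq (fun k => (htpos k).le) (fun k => (hspos k).le) hx hy
  have hc : Antitone fun k => t k * s k := fun i j hij =>
    mul_le_mul (htmono hij) (hsmono hij) (hspos j).le (htpos i).le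
  have hweight : 0 ≤ 1 - t n * s n / (t 0 * s 0) :=
    sub_nonneg.2 ((div_le_one (mul_pos (htpos 0) (hspos 0))).2 (hc n.zero_le))
  have herr := sum_norm_sub_le_of_mem_infoProdLr hr0 hr1 hab
  rw [PsiStar_self, ← ofReal_norm]
  refine ENNReal.ofReal_le_ofReal ?_
  calc _ ≤ t n * s n + (1 - t n * s n / (t 0 * s 0)) *
        ∑ k : Fin n, ‖x k * y k - ab.1 k * ab.2 k‖ :=
        norm_tsum_sub_sum_le hc (fun k => mul_pos (htpos k) (hspos k)) hD0 hD hD1 hxy _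
    _ ≤ t n * s n + (1 - t n * s n / (t 0 * s 0)) * ε :=
        add_le_add_right (mul_le_mul_of_nonneg_left herr hweight) _
    _ = _ := by ring

/-- The witness is `x_k = t_k w_k^{1/p}`, `y_k = s_k w_k^{1/q}`, so that `x_k y_k = t_k s_k w_k`. -/
theorem ofReal_tsum_le_optErrSP (hpq : p.HolderConjugate q) (ht : ∀ k, 0 ≤ t k)
    (hs : ∀ k, 0 ≤ s k) {w : ℕ → ℝ} (hw : ∀ k, 0 ≤ w k) (hws : Summable w)
    (hw1 : ∑' k, w k ≤ 1) (hinfo : (∑ k : Fin n, (t k * s k * w k) ^ r) ^ (1 / r) ≤ ε) :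
    ENNReal.ofReal (∑' k, t k * s k * w k) ≤ optErrSP (WT p t) (WT q s) (infoProdLr n r ε) := by
  set x : ℕ → ℂ := fun k => (t k : ℂ) * ((w k ^ (1 / p) : ℝ) : ℂ) with hx_def
  set y : ℕ → ℂ := fun k => (s k : ℂ) * ((w k ^ (1 / q) : ℝ) : ℂ) with hy_def
  have hxy : ∀ k, x k * y k = ((t k * s k * w k : ℝ) : ℂ) := fun k => by
    have hexp : 1 / p + 1 / q = 1 := by simpa only [one_div] using hpq.inv_add_inv_eq_one
    have hw_eq : w k ^ (1 / p) * w k ^ (1 / q) = w k := by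
      rw [← Real.rpow_add' (hw k) (by rw [hexp]; exact one_ne_zero), hexp, Real.rpow_one]
    conv_rhs => rw [← hw_eq]
    push_cast
    ring
  have hzero_mem : ∀ x' : ℕ → ℂ, (∀ k, ‖x' k * y k‖ = ‖x k * y k‖) →
      ((0, 0) : (Fin n → ℂ) × (Fin n → ℂ)) ∈ infoProdLr n r ε x' y := fun x' hx' => by
    simpa only [infoProdLr, Set.mem_ofPred_eq, Pi.zero_apply, mul_zero, sub_zero, hx', hxy,
      Complex.norm_real, Real.norm_of_nonneg (mul_nonneg (mul_nonneg (ht _) (hs _)) (hw _))]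
      using hinfo
  have hA : scalarProd x y = ((∑' k, t k * s k * w k : ℝ) : ℂ) := by
    simp only [scalarProd, hxy, Complex.ofReal_tsum]
  calc ENNReal.ofReal (∑' k, t k * s k * w k) ≤ ‖scalarProd x y‖ₑ := by
        rw [hA, ← ofReal_norm, Complex.norm_real]
        exact ENNReal.ofReal_le_ofReal (Real.le_norm_self _)
    _ ≤ _ := enorm_scalarProd_le_optErrSP (mem_WT_of_tsum_le_one hpq.pos t hw hws hw1)
        (neg_mem_WT (mem_WT_of_tsum_le_one hpq.pos t hw hws hw1))
        (mem_WT_of_tsum_le_one hpq.symm.pos s hw hws hw1)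
        (hzero_mem x fun _ => rfl) (hzero_mem (-x) fun k => by simp)

theorem ofReal_le_optErrSP_of_two_point (hn : 0 < n) (hpq : p.HolderConjugate q) (hr0 : 0 < r)
    (ht : ∀ k, 0 ≤ t k) (hs : ∀ k, 0 ≤ s k) {α β : ℝ} (hα : 0 ≤ α) (hβ : 0 ≤ β)
    (hαβ : α + β ≤ 1) (hε : t 0 * s 0 * α ≤ ε) :
    ENNReal.ofReal (t 0 * s 0 * α + t n * s n * β) ≤
      optErrSP (WT p t) (WT q s) (infoProdLr n r ε) := by
  set w : ℕ → ℝ := Pi.single 0 α + Pi.single n β with hw_def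
  have hw : HasSum w (α + β) := (hasSum_pi_single 0 α).add (hasSum_pi_single n β)
  have htsw : HasSum (fun k => t k * s k * w k) (t 0 * s 0 * α + t n * s n * β) := by
    convert (hasSum_pi_single 0 (t 0 * s 0 * α)).add (hasSum_pi_single n (t n * s n * β)) using 1
    funext k
    simp only [hw_def, Pi.add_apply, Pi.single_apply]
    split_ifs <;> simp_all
  have hinfo : ∑ k : Fin n, (t k * s k * w k) ^ r = (t 0 * s 0 * α) ^ r := by
    rw [sum_eq_single_of_mem ⟨0, hn⟩ (mem_univ _) fun k _ hk => ?_]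
    · simp [hw_def, Pi.single_eq_of_ne hn.ne]
    · have hk0 : (k : ℕ) ≠ 0 := fun h => hk (Fin.ext h)
      simp [hw_def, hk0, k.2.ne, Real.zero_rpow hr0.ne']
  rw [← htsw.tsum_eq]
  refine ofReal_tsum_le_optErrSP hpq ht hs (fun k => ?_) hw.summable (hw.tsum_eq ▸ hαβ) ?_
  · simp only [hw_def, Pi.add_apply, Pi.single_apply]
    split_ifs <;> linarith
  · rwa [hinfo, one_div, Real.rpow_rpow_inv (mul_nonneg (mul_nonneg (ht 0) (hs 0)) hα) hr0.ne']

end Recovery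

/-- optimal recovery of the scalar product on `W^{T,S}_{p,q}` from the
first `n` coordinatewise products known with an error measured in `ℓ^n_r`, `0 < r ≤ 1`
(0-based: `t 0 * s 0` is the paper's `t₁s₁`, `t n * s n` is `t_{n+1}s_{n+1}`). -/
theorem optimal_recovery_scalar_product_lr_error_small_r
    (n : ℕ) (hn : 1 ≤ n) (p q : ℝ) (hp : 1 < p) (hq : q = p / (p - 1))
    (r : ℝ) (hr0 : 0 < r) (hr1 : r ≤ 1)
    (t s : ℕ → ℝ) (htpos : ∀ k, 0 < t k) (htmono : Antitone t)
    (hspos : ∀ k, 0 < s k) (hsmono : Antitone s)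
    (ε : ℝ) (hε : 0 ≤ ε) :
    (ε ≤ t 0 * s 0 →
      optErrSP (WT p t) (WT q s) (infoProdLr n r ε) =
        recErrSP (WT p t) (WT q s) (infoProdLr n r ε) (PsiStar t s n n) ∧
      recErrSP (WT p t) (WT q s) (infoProdLr n r ε) (PsiStar t s n n) =
        ENNReal.ofReal (t n * s n + ε * (1 - t n * s n / (t 0 * s 0)))) ∧
    (t 0 * s 0 < ε →
      optErrSP (WT p t) (WT q s) (infoProdLr n r ε) =
        recErrSP (WT p t) (WT q s) (infoProdLr n r ε) (PsiStar t s n 0) ∧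
      recErrSP (WT p t) (WT q s) (infoProdLr n r ε) (PsiStar t s n 0) =
        ENNReal.ofReal (t 0 * s 0)) := by
  have hpq : p.HolderConjugate q := (Real.holderConjugate_iff_eq_conjExponent hp).2 hq
  have hts : 0 < t 0 * s 0 := mul_pos (htpos 0) (hspos 0)
  have ht := fun k => (htpos k).le
  have hs := fun k => (hspos k).le
  constructor
  · intro hle
    refine optErrSP_eq_recErrSP_of_le
      (recErrSP_PsiStar_self_le hpq hr0 hr1 htpos htmono hspos hsmono) ?_
    have hα : ε / (t 0 * s 0) ≤ 1 := (div_le_one hts).2 hle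
    convert ofReal_le_optErrSP_of_two_point hn hpq hr0 ht hs (div_nonneg hε hts.le)
      (sub_nonneg.2 hα) (add_sub_cancel _ _).le (mul_div_cancel₀ ε hts.ne').le using 2
    rw [mul_div_cancel₀ ε hts.ne']
    ring
  · intro hlt
    refine optErrSP_eq_recErrSP_of_le
      (recErrSP_PsiStar_zero_le hpq htpos htmono hspos hsmono) ?_
    simpa using ofReal_le_optErrSP_of_two_point hn hpq hr0 ht hs zero_le_one le_rfl
      (by norm_num) (by simpa using hlt.le)
end

section
/- Let 1 < r < ∞, n ∈ ℕ, and let (t_k) and (s_k) be positive sequences such that the sequence (t_k s_k) is strictly decreasing. For m = 1,…,n define τ_{j,m} = (1 − t_{m+1} s_{m+1}/(t_j s_j))^{1/(r−1)} for j = 1,…,m, and set d₁ = t₁ s₁ and, for m ≥ 2, d_m = ( Σ_{j=1}^{m} τ_{j,m}^r )^{1/r} · ( Σ_{j=1}^{m} τ_{j,m}/(t_j s_j) )^{−1}. Then the finite sequence d₁ ≥ d₂ ≥ … ≥ d_n is non-increasing. -/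
open scoped BigOperators

/-- The constants `d_m`: `d₁ = t₁s₁` and, for `m ≥ 2`,
`d_m = (∑_{j=1}^m τ_{j,m}^r)^{1/r} · (∑_{j=1}^m τ_{j,m}/(t_j s_j))^{−1}`, where
`τ_{j,m} = (1 − t_{m+1}s_{m+1}/(t_j s_j))^{1/(r−1)}` (0-based indexing:
`t k * s k` is the paper's `t_{k+1}s_{k+1}`). -/
noncomputable def dSeq (r : ℝ) (t s : ℕ → ℝ) : ℕ → ℝ := fun m =>
  if m = 1 then t 0 * s 0 else
    (∑ j ∈ Finset.range m,
        ((1 - t m * s m / (t j * s j)) ^ (1 / (r - 1))) ^ r) ^ (1 / r) *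
    (∑ j ∈ Finset.range m,
        (1 - t m * s m / (t j * s j)) ^ (1 / (r - 1)) / (t j * s j))⁻¹

/-!
Write `a_k = t_k s_k`, `τ_c(x) = (1 - x/c)^{1/(r-1)}` and
`F(x) = (∑_{j ≤ m} τ_{a_j}(x)^r)^{1/r} / ∑_{j ≤ m} τ_{a_j}(x)/a_j`. Then `d_{m+1} = F(a_{m+1})`
and also `d_m = F(a_m)`, since the extra term `j = m` vanishes at `x = a_m`; so it suffices that
`F` is nondecreasing on `x ≤ a_m`. Because `τ_c^{r-1} = 1 - x/c`, the sums `S = ∑ τ^r` and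
`T = ∑ τ/a_j` satisfy `S' = -r/(r-1) · T` and `T' = -W/(r-1)` with `W = ∑ τ/(a_j(a_j - x))`,
hence `F' = S^{1/r-1} (S W - T²) / ((r-1) T²)`, and `T² ≤ S W` is Cauchy–Schwarz for the
factorisation `(τ/a)² = τ^r · τ/(a(a - x))`.
-/

open Finset Set

noncomputable def tau (r c x : ℝ) : ℝ := (1 - x / c) ^ (1 / (r - 1))

section Tau

variable {r c x : ℝ}

lemma one_sub_div_pos (hc : 0 < c) (hx : x < c) : 0 < 1 - x / c := by
  rw [sub_pos, div_lt_one hc]; exact hx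

lemma tau_nonneg (hc : 0 < c) (hx : x ≤ c) : 0 ≤ tau r c x :=
  Real.rpow_nonneg (by rw [sub_nonneg, div_le_one hc]; exact hx) _

lemma tau_pos (hc : 0 < c) (hx : x < c) : 0 < tau r c x :=
  Real.rpow_pos_of_pos (one_sub_div_pos hc hx) _

lemma tau_self (hr : r ≠ 1) (hc : c ≠ 0) : tau r c c = 0 := by
  rw [tau, div_self hc, sub_self, Real.zero_rpow (one_div_ne_zero (sub_ne_zero.mpr hr))]

lemma tau_rpow_sub_one (hr : r ≠ 1) (hc : 0 < c) (hx : x ≤ c) :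
    tau r c x ^ (r - 1) = 1 - x / c := by
  rw [tau, one_div, Real.rpow_inv_rpow (by rw [sub_nonneg, div_le_one hc]; exact hx)
    (sub_ne_zero.mpr hr)]

lemma tau_rpow (hr₀ : r ≠ 0) (hr : r ≠ 1) (hc : 0 < c) (hx : x ≤ c) :
    tau r c x ^ r = tau r c x * (1 - x / c) := by
  have h := Real.rpow_add' (tau_nonneg (r := r) hc hx) (y := 1) (z := r - 1) (by simpa using hr₀)
  rwa [add_sub_cancel, Real.rpow_one, tau_rpow_sub_one hr hc hx] at h

lemma continuous_tau (hr : 1 ≤ r) : Continuous (tau r c) :=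
  (Real.continuous_rpow_const (one_div_nonneg.mpr (sub_nonneg.mpr hr))).comp
    (continuous_const.sub (continuous_id.div_const c))

lemma hasDerivAt_tau (hc : 0 < c) (hx : x < c) :
    HasDerivAt (tau r c) (-(tau r c x / ((r - 1) * (c - x)))) x := by
  have hu := one_sub_div_pos hc hx
  have h := (((hasDerivAt_id x).div_const c).const_sub 1).rpow_const
    (p := 1 / (r - 1)) (Or.inl hu.ne')
  refine h.congr_deriv ?_
  rw [id_eq, Real.rpow_sub_one hu.ne', tau]
  field_simp

lemma hasDerivAt_tau_rpow (hr : r ≠ 1) (hc : 0 < c) (hx : x < c) :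
    HasDerivAt (fun y => tau r c y ^ r) (-(r / (r - 1) * (tau r c x / c))) x := by
  have h := (hasDerivAt_tau (r := r) hc hx).rpow_const (p := r) (Or.inl (tau_pos hc hx).ne')
  refine h.congr_deriv ?_
  rw [tau_rpow_sub_one hr hc hx.le]
  have : c - x ≠ 0 := sub_ne_zero.mpr hx.ne'
  have : r - 1 ≠ 0 := sub_ne_zero.mpr hr
  field_simp

end Tau

section Sums

variable {ι : Type*} (r : ℝ) (s : Finset ι) (a : ι → ℝ) (x : ℝ)

noncomputable def tauPowSum : ℝ := ∑ j ∈ s, tau r (a j) x ^ r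

noncomputable def tauDivSum : ℝ := ∑ j ∈ s, tau r (a j) x / a j

noncomputable def dFun : ℝ := tauPowSum r s a x ^ (1 / r) * (tauDivSum r s a x)⁻¹

end Sums

section DFun

variable {ι : Type*} {r x : ℝ} {s : Finset ι} {a : ι → ℝ}

lemma hasDerivAt_tauPowSum (hr : r ≠ 1) (ha : ∀ j ∈ s, 0 < a j) (hx : ∀ j ∈ s, x < a j) :
    HasDerivAt (tauPowSum r s a) (-(r / (r - 1) * tauDivSum r s a x)) x := by
  rw [tauDivSum, mul_sum, ← sum_neg_distrib]
  exact HasDerivAt.fun_sum fun j hj => hasDerivAt_tau_rpow hr (ha j hj) (hx j hj)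

lemma hasDerivAt_tauDivSum (ha : ∀ j ∈ s, 0 < a j) (hx : ∀ j ∈ s, x < a j) :
    HasDerivAt (tauDivSum r s a)
      (-(∑ j ∈ s, tau r (a j) x / (a j * (a j - x))) / (r - 1)) x := by
  rw [neg_div, sum_div, ← sum_neg_distrib]
  refine HasDerivAt.fun_sum fun j hj =>
    ((hasDerivAt_tau (ha j hj) (hx j hj)).div_const (a j)).congr_deriv ?_
  have := (ha j hj).ne'
  have := sub_ne_zero.mpr (hx j hj).ne'
  field_simp

lemma sq_tauDivSum_le (hr : 1 < r) (ha : ∀ j ∈ s, 0 < a j) (hx : ∀ j ∈ s, x < a j) :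
    tauDivSum r s a x ^ 2 ≤
      tauPowSum r s a x * ∑ j ∈ s, tau r (a j) x / (a j * (a j - x)) := by
  refine sum_sq_le_sum_mul_sum_of_sq_le_mul s
    (fun j hj => Real.rpow_nonneg (tau_nonneg (ha j hj) (hx j hj).le) r)
    (fun j hj => div_nonneg (tau_nonneg (ha j hj) (hx j hj).le)
      (mul_nonneg (ha j hj).le (sub_nonneg.mpr (hx j hj).le))) fun j hj => le_of_eq ?_
  rw [tau_rpow (by positivity) hr.ne' (ha j hj) (hx j hj).le]
  have := (ha j hj).ne'
  have := sub_ne_zero.mpr (hx j hj).ne'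
  field_simp

lemma tauDivSum_pos (ha : ∀ j ∈ s, 0 < a j) (hx : ∀ j ∈ s, x ≤ a j) (hs : ∃ j ∈ s, x < a j) :
    0 < tauDivSum r s a x := by
  obtain ⟨j, hj, hxj⟩ := hs
  exact sum_pos' (fun i hi => div_nonneg (tau_nonneg (ha i hi) (hx i hi)) (ha i hi).le)
    ⟨j, hj, div_pos (tau_pos (ha j hj) hxj) (ha j hj)⟩

lemma tauPowSum_pos (ha : ∀ j ∈ s, 0 < a j) (hx : ∀ j ∈ s, x ≤ a j) (hs : ∃ j ∈ s, x < a j) :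
    0 < tauPowSum r s a x := by
  obtain ⟨j, hj, hxj⟩ := hs
  exact sum_pos' (fun i hi => Real.rpow_nonneg (tau_nonneg (ha i hi) (hx i hi)) r)
    ⟨j, hj, Real.rpow_pos_of_pos (tau_pos (ha j hj) hxj) r⟩

lemma hasDerivAt_dFun (hr : 1 < r) (ha : ∀ j ∈ s, 0 < a j) (hx : ∀ j ∈ s, x < a j)
    (hs : s.Nonempty) :
    HasDerivAt (dFun r s a)
      (tauPowSum r s a x ^ (1 / r - 1) *
        (tauPowSum r s a x * ∑ j ∈ s, tau r (a j) x / (a j * (a j - x)) - tauDivSum r s a x ^ 2) /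
          ((r - 1) * tauDivSum r s a x ^ 2)) x := by
  obtain ⟨j, hj⟩ := hs
  have hS := tauPowSum_pos (r := r) ha (fun i hi => (hx i hi).le) ⟨j, hj, hx j hj⟩
  have hT := tauDivSum_pos (r := r) ha (fun i hi => (hx i hi).le) ⟨j, hj, hx j hj⟩
  refine (((hasDerivAt_tauPowSum hr.ne' ha hx).rpow_const (p := 1 / r) (Or.inl hS.ne')).mul
    ((hasDerivAt_tauDivSum ha hx).inv hT.ne')).congr_deriv ?_
  have hsplit :
      tauPowSum r s a x ^ (1 / r) = tauPowSum r s a x ^ (1 / r - 1) * tauPowSum r s a x := by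
    rw [Real.rpow_sub_one hS.ne', div_mul_cancel₀ _ hS.ne']
  rw [Pi.inv_apply, hsplit]
  have : r - 1 ≠ 0 := sub_ne_zero.mpr hr.ne'
  have : r ≠ 0 := by positivity
  field_simp
  ring

lemma continuousOn_dFun (hr : 1 < r) (ha : ∀ j ∈ s, 0 < a j) {b : ℝ} (hb : ∀ j ∈ s, b ≤ a j)
    (hs : ∃ j ∈ s, b < a j) : ContinuousOn (dFun r s a) (Iic b) := by
  have hS : Continuous (tauPowSum r s a) := continuous_finsetSum s fun j _ =>
    (continuous_tau hr.le).rpow_const fun _ => Or.inr (by positivity)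
  have hT : Continuous (tauDivSum r s a) := continuous_finsetSum s fun j _ =>
    (continuous_tau hr.le).div_const _
  refine ((hS.rpow_const fun _ => Or.inr (by positivity)).continuousOn).mul
    (hT.continuousOn.inv₀ fun y hy => (tauDivSum_pos (r := r) ha ?_ ?_).ne')
  · exact fun j hj => le_trans hy (hb j hj)
  · obtain ⟨j, hj, hbj⟩ := hs
    exact ⟨j, hj, lt_of_le_of_lt hy hbj⟩

lemma dFun_monotoneOn (hr : 1 < r) (ha : ∀ j ∈ s, 0 < a j) {b : ℝ} (hb : ∀ j ∈ s, b ≤ a j)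
    (hs : ∃ j ∈ s, b < a j) : MonotoneOn (dFun r s a) (Iic b) := by
  have hx : ∀ x ∈ interior (Iic b), ∀ j ∈ s, x < a j := fun x hx j hj =>
    lt_of_lt_of_le (by simpa using hx) (hb j hj)
  have hne : s.Nonempty := let ⟨j, hj, _⟩ := hs; ⟨j, hj⟩
  refine monotoneOn_of_hasDerivWithinAt_nonneg (convex_Iic b) (continuousOn_dFun hr ha hb hs)
    (fun x hx' => (hasDerivAt_dFun hr ha (hx x hx') hne).hasDerivWithinAt) fun x hx' => ?_
  have hxj := hx x hx'
  obtain ⟨j, hj⟩ := hne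
  have hS := tauPowSum_pos (r := r) ha (fun i hi => (hxj i hi).le) ⟨j, hj, hxj j hj⟩
  have hCS := sub_nonneg.mpr (sq_tauDivSum_le hr ha hxj)
  have : 0 < r - 1 := sub_pos.mpr hr
  positivity

end DFun

lemma dFun_singleton {ι : Type*} {r x : ℝ} {a : ι → ℝ} {j : ι} (hr : r ≠ 0) (ha : 0 < a j)
    (hx : x < a j) : dFun r {j} a x = a j := by
  have hτ := tau_pos (r := r) ha hx
  rw [dFun, tauPowSum, tauDivSum, sum_singleton, sum_singleton, one_div,
    Real.rpow_rpow_inv hτ.le hr]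
  field_simp

lemma dFun_range_succ_self {r : ℝ} {a : ℕ → ℝ} {m : ℕ} (hr : 1 < r) (ha : a m ≠ 0) :
    dFun r (range (m + 1)) a (a m) = dFun r (range m) a (a m) := by
  simp only [dFun, tauPowSum, tauDivSum, sum_range_succ, tau_self hr.ne' ha,
    Real.zero_rpow (by positivity : r ≠ 0), zero_div, add_zero]

lemma dSeq_eq_dFun {r : ℝ} {t s : ℕ → ℝ} (hr : 1 < r) (hpos : ∀ k, 0 < t k * s k)
    (h₁₀ : t 1 * s 1 < t 0 * s 0) {m : ℕ} (hm : 1 ≤ m) :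
    dSeq r t s m = dFun r (range m) (fun k => t k * s k) (t m * s m) := by
  rcases hm.eq_or_lt with rfl | hm
  · rw [range_one, dFun_singleton (a := fun k => t k * s k) (by positivity) (hpos 0) h₁₀]
    rfl
  · rw [dSeq, if_neg hm.ne']
    rfl

/-- for `1 < r < ∞` and positive sequences `t`, `s` with `(t_k s_k)`
strictly decreasing, the finite sequence `d₁ ≥ d₂ ≥ … ≥ d_n` is non-increasing. -/
theorem dSeq_antitone (r : ℝ) (hr : 1 < r)
    (t s : ℕ → ℝ) (htpos : ∀ k, 0 < t k) (hspos : ∀ k, 0 < s k)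
    (hts : StrictAnti fun k => t k * s k) (n : ℕ) :
    ∀ m, 1 ≤ m → m + 1 ≤ n → dSeq r t s (m + 1) ≤ dSeq r t s m := by
  intro m hm _
  set a : ℕ → ℝ := fun k => t k * s k
  have ha : ∀ k, 0 < a k := fun k => mul_pos (htpos k) (hspos k)
  have hmono : MonotoneOn (dFun r (range (m + 1)) a) (Iic (a m)) :=
    dFun_monotoneOn hr (fun j _ => ha j)
      (fun j hj => hts.antitone (Nat.lt_succ_iff.mp (mem_range.mp hj)))
      ⟨0, by simp, hts (by omega)⟩
  have hlt : a (m + 1) < a m := hts m.lt_succ_self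
  calc dSeq r t s (m + 1) = dFun r (range (m + 1)) a (a (m + 1)) :=
        dSeq_eq_dFun hr ha (hts one_pos) (by omega)
    _ ≤ dFun r (range (m + 1)) a (a m) := hmono hlt.le (mem_Iic.mpr le_rfl) hlt.le
    _ = dFun r (range m) a (a m) := dFun_range_succ_self hr (ha m).ne'
    _ = dSeq r t s m := (dSeq_eq_dFun hr ha (hts one_pos) hm).symm
end
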